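/- arXiv:2304.02401 — 2 statements merged into one kernel-verified Lean document; each statement's English description precedes it below -/
import Mathlib

section
/- The Laplace mechanism, which outputs f(D) + L(GS_f/ε) where L(β) is Laplace noise with scale β and GS_f is the global sensitivity of f, satisfies ε-differential privacy: for any two neighboring datasets D, D' and any measurable set T, Pr[A(D) ∈ T] ≤ e^ε · Pr[A(D') ∈ T]. -/
open MeasureTheory

/-- The Laplace mechanism satisfies ε-differential privacy. -/
theorem laplace_mechanism_dp {α : Type*}
    (adj : α → α → Prop)                      -- neighboring relation on datasets
    (f : α → ℝ) (ε GS : ℝ)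
    (hε : 0 < ε) (hGS : 0 < GS)
    (hsens : ∀ D D', adj D D' → |f D - f D'| ≤ GS)  -- GS is the global sensitivity of f
    (A : α → Measure ℝ)
    -- A(D) = f(D) + Lap(GS/ε), i.e. the law with density (1/(2β)) e^{-|x - f(D)|/β}, β = GS/ε
    (hA : ∀ D, A D = volume.withDensity
      (fun x => ENNReal.ofReal ((ε / (2 * GS)) * Real.exp (-(|x - f D|) / (GS / ε))))) :
    ∀ D D' (T : Set ℝ), adj D D' → MeasurableSet T →
      A D T ≤ ENNReal.ofReal (Real.exp ε) * A D' T := by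
  intro D D' T hadj hT
  have hβ : (0:ℝ) < GS / ε := div_pos hGS hε
  have hc : (0:ℝ) ≤ ε / (2 * GS) := le_of_lt (div_pos hε (by linarith))
  have key : ∀ x : ℝ,
      (ε / (2 * GS)) * Real.exp (-(|x - f D|) / (GS / ε))
        ≤ Real.exp ε * ((ε / (2 * GS)) * Real.exp (-(|x - f D'|) / (GS / ε))) := by
    intro x
    have h1 : |x - f D'| - |x - f D| ≤ |f D - f D'| := by
      have := abs_sub_abs_le_abs_sub (x - f D') (x - f D)
      have h2 : (x - f D') - (x - f D) = f D - f D' := by ring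
      rw [h2] at this
      linarith [this]
    have h2 : |x - f D'| - |x - f D| ≤ GS := le_trans h1 (hsens D D' hadj)
    have h3 : -(|x - f D|) / (GS / ε) ≤ ε + -(|x - f D'|) / (GS / ε) := by
      rw [div_le_iff₀ hβ] at *
      have : (ε + -(|x - f D'|) / (GS / ε)) * (GS / ε)
          = ε * (GS / ε) + -(|x - f D'|) := by
        field_simp
      rw [this]
      have hgs : ε * (GS / ε) = GS := by field_simp
      rw [hgs]
      linarith
    calc (ε / (2 * GS)) * Real.exp (-(|x - f D|) / (GS / ε))
        ≤ (ε / (2 * GS)) * Real.exp (ε + -(|x - f D'|) / (GS / ε)) := by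
          apply mul_le_mul_of_nonneg_left (Real.exp_le_exp.mpr h3) hc
      _ = Real.exp ε * ((ε / (2 * GS)) * Real.exp (-(|x - f D'|) / (GS / ε))) := by
          rw [Real.exp_add]; ring
  rw [hA D, hA D', withDensity_apply _ hT, withDensity_apply _ hT]
  have hmeas : Measurable (fun x : ℝ =>
      ENNReal.ofReal ((ε / (2 * GS)) * Real.exp (-(|x - f D'|) / (GS / ε)))) := by
    apply Measurable.ennreal_ofReal
    apply Measurable.const_mul
    exact (Real.measurable_exp.comp ((measurable_id.sub_const (f D')).abs.neg.div_const _))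
  rw [← lintegral_const_mul _ hmeas]
  apply lintegral_mono
  intro x
  calc ENNReal.ofReal ((ε / (2 * GS)) * Real.exp (-(|x - f D|) / (GS / ε)))
      ≤ ENNReal.ofReal (Real.exp ε * ((ε / (2 * GS)) * Real.exp (-(|x - f D'|) / (GS / ε)))) :=
        ENNReal.ofReal_le_ofReal (key x)
    _ = ENNReal.ofReal (Real.exp ε) *
        ENNReal.ofReal ((ε / (2 * GS)) * Real.exp (-(|x - f D'|) / (GS / ε))) := by
        rw [ENNReal.ofReal_mul (le_of_lt (Real.exp_pos ε))]
end

section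
/- The exponential mechanism, which on input v outputs o ∈ O with probability proportional to exp(ε · q(v,o) / (2·GS_q)), satisfies ε-differential privacy: for any neighboring inputs v ≃ v' and any output o, Pr[A(v) = o] ≤ e^ε · Pr[A(v') = o]. -/
open Finset

/-- The exponential mechanism satisfies ε-differential privacy. -/
theorem exponential_mechanism_dp {V O : Type*} [Fintype O]
    (adj : V → V → Prop)                    -- neighboring relation on inputs
    (q : V → O → ℝ) (ε GSq : ℝ)
    (hε : 0 < ε) (hGSq : 0 < GSq)
    (hsens : ∀ (o : O) (v v' : V), adj v v' → |q v o - q v' o| ≤ GSq)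
    (P : V → O → ℝ)
    -- Pr[A(v) = o] = exp((ε/(2 GSq)) q(v,o)) / Σ_{o'} exp((ε/(2 GSq)) q(v,o'))
    (hP : ∀ v o, P v o =
      Real.exp ((ε / (2 * GSq)) * q v o) /
        ∑ o' : O, Real.exp ((ε / (2 * GSq)) * q v o')) :
    ∀ v v' (o : O), adj v v' → P v o ≤ Real.exp ε * P v' o := by
  intro v v' o hadj
  set c : ℝ := ε / (2 * GSq) with hc
  have hcpos : 0 < c := div_pos hε (by linarith)
  have key1 : ∀ (o' : O), Real.exp (c * q v o') ≤ Real.exp (ε / 2) * Real.exp (c * q v' o') := by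
    intro o'
    rw [← Real.exp_add]
    apply Real.exp_le_exp.mpr
    have h1 : q v o' - q v' o' ≤ GSq := (abs_le.mp (hsens o' v v' hadj)).2
    have : c * GSq = ε / 2 := by rw [hc]; field_simp
    nlinarith
  have key2 : ∀ (o' : O), Real.exp (c * q v' o') ≤ Real.exp (ε / 2) * Real.exp (c * q v o') := by
    intro o'
    rw [← Real.exp_add]
    apply Real.exp_le_exp.mpr
    have h1 : -(GSq) ≤ q v o' - q v' o' := (abs_le.mp (hsens o' v v' hadj)).1
    have : c * GSq = ε / 2 := by rw [hc]; field_simp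
    nlinarith
  have hS : ∀ w : V, 0 < ∑ o' : O, Real.exp (c * q w o') := by
    intro w
    have : Nonempty O := ⟨o⟩
    exact Finset.sum_pos (fun i _ => Real.exp_pos _) Finset.univ_nonempty
  have hSum : (∑ o' : O, Real.exp (c * q v' o')) ≤
      Real.exp (ε / 2) * ∑ o' : O, Real.exp (c * q v o') := by
    rw [Finset.mul_sum]
    exact Finset.sum_le_sum fun i _ => key2 i
  rw [hP, hP]
  rw [div_le_iff₀ (hS v)]
  have hexp2 : Real.exp (ε / 2) * Real.exp (ε / 2) = Real.exp ε := by
    rw [← Real.exp_add]; ring_nf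
  calc Real.exp (c * q v o)
      ≤ Real.exp (ε / 2) * Real.exp (c * q v' o) := key1 o
    _ ≤ Real.exp ε * Real.exp (c * q v' o) / (∑ o' : O, Real.exp (c * q v' o')) *
        (∑ o' : O, Real.exp (c * q v o')) := by
        rw [div_mul_eq_mul_div (Real.exp ε * Real.exp (c * q v' o))
            (∑ o' : O, Real.exp (c * q v' o')) (∑ o' : O, Real.exp (c * q v o')),
          le_div_iff₀ (hS v')]
        have h1 : Real.exp (c * q v' o) * (∑ o' : O, Real.exp (c * q v' o')) ≤
            Real.exp (c * q v' o) * (Real.exp (ε / 2) * ∑ o' : O, Real.exp (c * q v o')) :=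
          mul_le_mul_of_nonneg_left hSum (Real.exp_pos _).le
        have h2 := mul_le_mul_of_nonneg_left h1 (Real.exp_pos (ε / 2)).le
        rw [← hexp2]; nlinarith [h2]
    _ = Real.exp ε * (Real.exp (c * q v' o) / ∑ o' : O, Real.exp (c * q v' o')) *
        (∑ o' : O, Real.exp (c * q v o')) := by ring
end
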